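/- arXiv:2012.08454 — 4 statements merged into one kernel-verified Lean document; each statement's English description precedes it below -/
import Mathlib

section
/- Let (G, H, α, τ) be a crossed module. In the decorated category with morphisms pairs (γ̃, h), where γ̃ is a morphism of a groupoid P carrying a free right G-action, define the G-categorical group action by (γ̃, h)·(h', g') = (γ̃ g', g'⁻¹ h h' g') (using α written as conjugation notation g⁻¹hg := α_{g⁻¹}(h)), and composition (δ̃, h₂) ∘ (γ̃, h₁) = (δ̃ τ(h₁)⁻¹ ∘ γ̃, h₁h₂) when s(δ̃) = t(γ̃)τ(h₁). Then the action commutes with composition: ((δ̃,h₂)(h₂',g₂')) ∘ ((γ̃,h₁)(h₁',g₁')) = ((δ̃,h₂)∘(γ̃,h₁)) · ((h₂',g₂')∘(h₁',g₁')) whenever g₂' = τ(h₁')g₁' and the compositions are defined. In particular the two sides both equal (δ̃ τ(h₁)⁻¹ g₁' ∘ γ̃ g₁', g₁'⁻¹ h₁h₂h₂'h₁' g₁'). -/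
/-- Action of a morphism `(h', g') ∈ H ⋊_α G` on a decorated morphism `(γ̃, h)`:
`(γ̃, h)·(h', g') = (γ̃ g', g'⁻¹ h h' g')`, where `g⁻¹hg := α_{g⁻¹}(h)`. -/
def dact {Mor H G : Type*} [Group H] [Group G] (α : G →* MulAut H)
    (actM : Mor → G → Mor) (x : Mor × H) (φ : H × G) : Mor × H :=
  (actM x.1 φ.2, α φ.2⁻¹ (x.2 * φ.1))

/-- Decorated composition `(δ̃, h₂) ∘ (γ̃, h₁) = (δ̃ τ(h₁)⁻¹ ∘ γ̃, h₁ h₂)`. -/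
def dcomp {Mor H G : Type*} [Group H] [Group G] (τ : H →* G)
    (compP : Mor → Mor → Mor) (actM : Mor → G → Mor) (x y : Mor × H) : Mor × H :=
  (compP (actM x.1 (τ y.2)⁻¹) y.1, y.2 * x.2)

/-- The action of the categorical group on decorated morphisms commutes with
composition, both sides being `(δ̃ τ(h₁)⁻¹ g₁' ∘ γ̃ g₁', g₁'⁻¹ h₁h₂h₂'h₁' g₁')`. -/
theorem stmt4 {Obj Mor G H : Type*} [Group G] [Group H]
    (τ : H →* G) (α : G →* MulAut H)
    (peiffer1 : ∀ (g : G) (h : H), τ (α g h) = g * τ h * g⁻¹)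
    (peiffer2 : ∀ (h h' : H), α (τ h) h' = h * h' * h⁻¹)
    (s t : Mor → Obj) (compP : Mor → Mor → Mor)
    (actO : Obj → G → Obj) (actM : Mor → G → Mor)
    -- right action axioms
    (hactM1 : ∀ x, actM x 1 = x)
    (hactMmul : ∀ x a b, actM (actM x a) b = actM x (a * b))
    (hactO1 : ∀ p, actO p 1 = p)
    (hactOmul : ∀ p a b, actO (actO p a) b = actO p (a * b))
    -- the action commutes with source, target and composition
    (hs : ∀ x g, s (actM x g) = actO (s x) g)
    (ht : ∀ x g, t (actM x g) = actO (t x) g)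
    (hactcomp : ∀ x y g, actM (compP x y) g = compP (actM x g) (actM y g))
    (γ δ : Mor) (h₁ h₂ h₁' h₂' : H) (g₁' g₂' : G)
    -- composability of the decorated morphisms and of the group morphisms
    (hcompo : s δ = actO (t γ) (τ h₁))
    (hg : g₂' = τ h₁' * g₁') :
    dcomp τ compP actM (dact α actM (δ, h₂) (h₂', g₂'))
        (dact α actM (γ, h₁) (h₁', g₁'))
      = dact α actM (dcomp τ compP actM (δ, h₂) (γ, h₁)) (h₂' * h₁', g₁') ∧
    dact α actM (dcomp τ compP actM (δ, h₂) (γ, h₁)) (h₂' * h₁', g₁')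
      = (compP (actM δ ((τ h₁)⁻¹ * g₁')) (actM γ g₁'),
          α g₁'⁻¹ (h₁ * h₂ * h₂' * h₁')) := by
  have key : dact α actM (dcomp τ compP actM (δ, h₂) (γ, h₁)) (h₂' * h₁', g₁')
      = (compP (actM δ ((τ h₁)⁻¹ * g₁')) (actM γ g₁'),
          α g₁'⁻¹ (h₁ * h₂ * h₂' * h₁')) := by
    simp only [dact, dcomp, hactcomp, hactMmul, Prod.mk.injEq]
    refine ⟨trivial, ?_⟩
    congr 1
    group
  refine ⟨?_, key⟩
  rw [key]
  simp only [dact, dcomp, hactMmul, Prod.mk.injEq, hg]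
  constructor
  · have hτ : τ (α g₁'⁻¹ (h₁ * h₁')) = g₁'⁻¹ * (τ h₁ * τ h₁') * g₁' := by
      rw [peiffer1, map_mul]; group
    rw [hτ]
    congr 1
    group
  · have h1 : α (τ h₁' * g₁')⁻¹ (h₂ * h₂')
        = α g₁'⁻¹ (h₁'⁻¹ * (h₂ * h₂') * h₁') := by
      rw [mul_inv_rev, MonoidHom.map_mul α g₁'⁻¹ (τ h₁')⁻¹, MulAut.mul_apply]
      congr 1
      have := peiffer2 h₁'⁻¹ (h₂ * h₂')
      rw [map_inv] at this
      rw [this]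
      group
    rw [h1, ← map_mul]
    congr 1
    group
end

section
/- Pushforward of a categorical connection along a decorated-to-pair-groupoid functor: if τ_{A₁} is a categorical connection on the decorated bundle and one defines τ_{A₂}(γ; p) = (q τ(h), p; γ) whenever τ_{A₁}(γ; p) = (γ̃, h) with q = t(γ̃), then τ_{A₂} satisfies (CC2): τ_{A₂}(γ; pg) = τ_{A₂}(γ; p)·1_g = (q τ(h) g, pg; γ) for all g ∈ G. -/
/-- Pushforward along the decorated-to-pair-groupoid functor: if
`τ_{A₁}(γ; p) = (γ̃, h)` with `q = t(γ̃)`, then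
`τ_{A₂}(γ; p) = (q τ(h), p; γ)`. -/
def conn₂ {Obj Mor MorM H G : Type*} [Group H] [Group G] (τ : H →* G)
    (t : Mor → Obj) (actO : Obj → G → Obj)
    (conn₁ : MorM → Obj → Mor × H) (γ : MorM) (p : Obj) : Obj × Obj × MorM :=
  (actO (t (conn₁ γ p).1) (τ (conn₁ γ p).2), p, γ)

/-- The pushforward connection `τ_{A₂}` satisfies (CC2):
`τ_{A₂}(γ; pg) = τ_{A₂}(γ; p)·1_g = (q τ(h) g, pg; γ)`. -/
theorem stmt10 {Obj Mor MorM G H : Type*} [Group G] [Group H]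
    (τ : H →* G) (α : G →* MulAut H)
    (peiffer1 : ∀ (g : G) (h : H), τ (α g h) = g * τ h * g⁻¹)
    (peiffer2 : ∀ (h h' : H), α (τ h) h' = h * h' * h⁻¹)
    (s t : Mor → Obj)
    (actO : Obj → G → Obj) (actM : Mor → G → Mor)
    (hactO1 : ∀ p, actO p 1 = p)
    (hactOmul : ∀ p a b, actO (actO p a) b = actO p (a * b))
    (htact : ∀ x g, t (actM x g) = actO (t x) g)
    (conn₁ : MorM → Obj → Mor × H)
    -- (CC2) for the connection on the decorated bundle
    (cc2 : ∀ γMor p g, conn₁ γMor (actO p g)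
      = (actM (conn₁ γMor p).1 g, α g⁻¹ (conn₁ γMor p).2))
    (γMor : MorM) (p : Obj) (γ : Mor) (h : H) (g : G)
    (hγ : conn₁ γMor p = (γ, h)) :
    conn₂ τ t actO conn₁ γMor (actO p g)
      = (actO (conn₂ τ t actO conn₁ γMor p).1 g,
          actO (conn₂ τ t actO conn₁ γMor p).2.1 g,
          (conn₂ τ t actO conn₁ γMor p).2.2) ∧
    conn₂ τ t actO conn₁ γMor (actO p g)
      = (actO (t γ) (τ h * g), actO p g, γMor) := by
  constructor <;>
  simp [conn₂, cc2, hγ, htact, hactOmul, ← map_inv, peiffer1, mul_assoc]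
end

section
/- Pushforward of a categorical connection preserves composition: with τ_{A₂}(γ;p) = (t(γ̃)τ(h), p; γ) when τ_{A₁}(γ;p) = (γ̃,h), if τ_{A₁}(γ;p) = (γ̃, h₁) with q = t(γ̃) and τ_{A₁}(δ; qτ(h₁)) is given via equivariance from τ_{A₁}(δ; q) = (δ̃, h₂) with r = t(δ̃), then τ_{A₂}(δ∘γ; p) = (r τ(h₂h₁), p; δ∘γ) = τ_{A₂}(δ; t(τ_{A₂}(γ;p))) ∘ τ_{A₂}(γ;p), where composition in the pair groupoid is (p₂,p₁;δ)∘(p₁,p₀;γ) = (p₂,p₀; δ∘γ). -/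
/-- Composition in the pair groupoid: `(p₂,p₁;δ)∘(p₁,p₀;γ) = (p₂,p₀;δ∘γ)`. -/
def pcomp {Obj MorM : Type*} (compM : MorM → MorM → MorM)
    (x y : Obj × Obj × MorM) : Obj × Obj × MorM :=
  (x.1, y.2.1, compM x.2.2 y.2.2)

/-- The pushforward connection preserves composition:
`τ_{A₂}(δ∘γ; p) = (r τ(h₂h₁), p; δ∘γ) = τ_{A₂}(δ; t(τ_{A₂}(γ;p))) ∘ τ_{A₂}(γ;p)`. -/
theorem stmt11 {Obj Mor MorM G H : Type*} [Group G] [Group H]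
    (τ : H →* G) (α : G →* MulAut H)
    (peiffer1 : ∀ (g : G) (h : H), τ (α g h) = g * τ h * g⁻¹)
    (peiffer2 : ∀ (h h' : H), α (τ h) h' = h * h' * h⁻¹)
    (s t : Mor → Obj) (compP : Mor → Mor → Mor)
    (compM : MorM → MorM → MorM)
    (actO : Obj → G → Obj) (actM : Mor → G → Mor)
    -- right action axioms
    (hactM1 : ∀ x, actM x 1 = x)
    (hactMmul : ∀ x a b, actM (actM x a) b = actM x (a * b))
    (hactO1 : ∀ p, actO p 1 = p)
    (hactOmul : ∀ p a b, actO (actO p a) b = actO p (a * b))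
    (htact : ∀ x g, t (actM x g) = actO (t x) g)
    (htcomp : ∀ x y, t (compP x y) = t x)
    (conn₁ : MorM → Obj → Mor × H)
    -- (CC2) for the decorated connection
    (cc2 : ∀ γMor p g, conn₁ γMor (actO p g)
      = (actM (conn₁ γMor p).1 g, α g⁻¹ (conn₁ γMor p).2))
    -- (CC3) for the decorated connection
    (cc3 : ∀ γMor δMor p, conn₁ (compM δMor γMor) p
      = dcomp τ compP actM
          (conn₁ δMor (actO (t (conn₁ γMor p).1) (τ (conn₁ γMor p).2)))
          (conn₁ γMor p))
    (γMor δMor : MorM) (p q r : Obj) (γ δ : Mor) (h₁ h₂ : H)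
    (hγ : conn₁ γMor p = (γ, h₁)) (hq : q = t γ)
    (hδ : conn₁ δMor q = (δ, h₂)) (hr : r = t δ) :
    conn₂ τ t actO conn₁ (compM δMor γMor) p
      = (actO r (τ (h₂ * h₁)), p, compM δMor γMor) ∧
    conn₂ τ t actO conn₁ (compM δMor γMor) p
      = pcomp compM
          (conn₂ τ t actO conn₁ δMor (conn₂ τ t actO conn₁ γMor p).1)
          (conn₂ τ t actO conn₁ γMor p) := by
  subst hq hr
  have key : ∀ a b : H, ((α (τ a))⁻¹ : MulAut H) b = a⁻¹ * b * a := by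
    intro a b
    rw [← map_inv α, ← map_inv τ, peiffer2, inv_inv]
  simp only [conn₂, pcomp, dcomp, cc3, cc2, hγ, hδ, htcomp, htact, hactMmul, hactOmul,
    hactM1, map_mul, map_inv, peiffer2, key, mul_inv_cancel, mul_assoc, inv_mul_cancel_left,
    mul_inv_cancel_left]
  constructor <;> trivial
end

section
/- The pushforward connection satisfies (CC3): if τ_Q(γ,q) = 𝕊(τ_P(γ,p))k_{p,q}, then the composite of two composable τ_Q-horizontal morphisms 𝕊(τ_P(γ₂,p₂))k_{p₂,q₂} ∘ 𝕊(τ_P(γ₁,p₁))k_{p₁,q₁} equals 𝕊(τ_P(γ₂∘γ₁, p₁a))k_{p₂,q₂}, where a ∈ G is determined by p₂ = t(τ_P(γ₁,p₁))·a; in particular it is again τ_Q-horizontal. -/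
/-- The pushforward connection satisfies (CC3): the composite of two
composable `τ_Q`-horizontal morphisms
`𝕊(τ_P(γ₂,p₂))k₂ ∘ 𝕊(τ_P(γ₁,p₁))k₁` equals `𝕊(τ_P(γ₂∘γ₁, p₁a))k₂`, where
`a ∈ G` is determined by `p₂ = t(τ_P(γ₁,p₁))·a`; in particular it is again
`τ_Q`-horizontal. -/
theorem stmt14 {ObjP MorP ObjQ MorQ ObjM MorM G K : Type*} [Group G] [Group K]
    (S : G →* K)
    (actOP : ObjP → G → ObjP) (actMP : MorP → G → MorP)
    (actOQ : ObjQ → K → ObjQ) (actMQ : MorQ → K → MorQ)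
    (sP tP : MorP → ObjP) (sQ tQ : MorQ → ObjQ)
    (compP : MorP → MorP → MorP) (compQ : MorQ → MorQ → MorQ)
    (compM : MorM → MorM → MorM)
    (So : ObjP → ObjQ) (Sm : MorP → MorQ)
    -- actions are free on objects of Q
    (hfreeQ : ∀ q (k k' : K), actOQ q k = actOQ q k' → k = k')
    -- action axioms
    (hactMQ1 : ∀ x, actMQ x 1 = x)
    (hactMQmul : ∀ x k k', actMQ (actMQ x k) k' = actMQ x (k * k'))
    (hactOQmul : ∀ q k k', actOQ (actOQ q k) k' = actOQ q (k * k'))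
    -- the actions commute with composition
    (hactcompQ : ∀ x y k, actMQ (compQ x y) k = compQ (actMQ x k) (actMQ y k))
    -- source/target equivariance in Q
    (hsQact : ∀ x k, sQ (actMQ x k) = actOQ (sQ x) k)
    (htQact : ∀ x k, tQ (actMQ x k) = actOQ (tQ x) k)
    -- equivariance of 𝕊 and its compatibility with the bundle structure
    (hSo : ∀ p a, So (actOP p a) = actOQ (So p) (S a))
    (hSm : ∀ x a, Sm (actMP x a) = actMQ (Sm x) (S a))
    (hScomp : ∀ x y, Sm (compP x y) = compQ (Sm x) (Sm y))
    (hSsource : ∀ x, sQ (Sm x) = So (sP x))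
    (hStarget : ∀ x, tQ (Sm x) = So (tP x))
    -- the categorical connection on P
    (connP : MorM → ObjP → MorP)
    (hsconn : ∀ γ p, sP (connP γ p) = p)
    (cc2 : ∀ γ p a, connP γ (actOP p a) = actMP (connP γ p) a)
    (cc3 : ∀ γ δ p, connP (compM δ γ) p
      = compP (connP δ (tP (connP γ p))) (connP γ p))
    (γ₁ γ₂ : MorM) (p₁ p₂ : ObjP) (k₁ k₂ : K) (a : G)
    -- `a` is determined by `p₂ = t(τ_P(γ₁,p₁))·a`
    (ha : p₂ = actOP (tP (connP γ₁ p₁)) a)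
    -- composability of the two τ_Q-horizontal morphisms
    (hcompo : sQ (actMQ (Sm (connP γ₂ p₂)) k₂)
      = tQ (actMQ (Sm (connP γ₁ p₁)) k₁)) :
    compQ (actMQ (Sm (connP γ₂ p₂)) k₂) (actMQ (Sm (connP γ₁ p₁)) k₁)
      = actMQ (Sm (connP (compM γ₂ γ₁) (actOP p₁ a))) k₂ := by
  set t := tP (connP γ₁ p₁) with ht
  have hk : k₁ = S a * k₂ := by
    have h1 : sQ (actMQ (Sm (connP γ₂ p₂)) k₂) = actOQ (So t) (S a * k₂) := by
      rw [hsQact, hSsource, hsconn, ha, hSo, hactOQmul]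
    have h2 : tQ (actMQ (Sm (connP γ₁ p₁)) k₁) = actOQ (So t) k₁ := by
      rw [htQact, hStarget]
    exact (hfreeQ _ _ _ (by rw [← h2, ← hcompo, h1])).symm
  have hRHS : connP (compM γ₂ γ₁) (actOP p₁ a)
      = actMP (compP (connP γ₂ t) (connP γ₁ p₁)) a := by
    rw [cc2, cc3]
  rw [hRHS, hSm, hScomp, hactMQmul, hactcompQ, ha, cc2, hSm, hactMQmul, hk]
end
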